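/- arXiv:2011.00159 — 3 statements merged into one kernel-verified Lean document; each statement's English description precedes it below -/
import Mathlib

section
/- In the strictly increasing slope case: if a cutoff curve e*: (v', v'') → (0,1) satisfies |de*(v)/dv| < 1 (so v ↦ v + e*(v) is strictly increasing), then there exist points (v_1, e_1) and (v_2, e_2) in (v', v'') × [0,1] and a constant c_0 with e_1 > e*(v_1), v_1 + e_1 < c_0 and e_2 < e*(v_2), v_2 + e_2 > c_0. That is, some arm below the cutoff has strictly larger latent utility v + e than some arm above the cutoff. -/
open Set

/-- A cutoff curve `e* : (v',v'') → (0,1)` whose slope has magnitude strictly less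
than one (so `v ↦ v + e*(v)` is strictly increasing) admits justified envy: there are
attribute pairs `(v₁,e₁)` above the curve and `(v₂,e₂)` below the curve and a constant
`c₀` with `v₁ + e₁ < c₀ < v₂ + e₂`, i.e. an excluded arm with strictly larger latent
utility than an included one. -/
theorem flat_cutoff_admits_justified_envy (v' v'' : ℝ) (hv : v' < v'')
    (estar d : ℝ → ℝ)
    (hrange : ∀ v ∈ Ioo v' v'', estar v ∈ Ioo (0 : ℝ) 1)
    (hderiv : ∀ v ∈ Ioo v' v'', HasDerivAt estar (d v) v)
    (hslope : ∀ v ∈ Ioo v' v'', |d v| < 1) :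
    ∃ v₁ e₁ v₂ e₂ c₀ : ℝ,
      v₁ ∈ Ioo v' v'' ∧ v₂ ∈ Ioo v' v'' ∧
      e₁ ∈ Icc (0 : ℝ) 1 ∧ e₂ ∈ Icc (0 : ℝ) 1 ∧
      estar v₁ < e₁ ∧ v₁ + e₁ < c₀ ∧
      e₂ < estar v₂ ∧ c₀ < v₂ + e₂ := by
  set f : ℝ → ℝ := fun v => v + estar v with hf
  have hderivf : ∀ v ∈ Ioo v' v'', HasDerivAt f (1 + d v) v := fun v hv0 =>
    (hasDerivAt_id v).add (hderiv v hv0)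
  have hmono : StrictMonoOn f (Ioo v' v'') := by
    apply strictMonoOn_of_deriv_pos (convex_Ioo v' v'')
    · exact fun v hv0 => ((hderivf v hv0).continuousAt).continuousWithinAt
    · intro v hv0
      rw [interior_Ioo] at hv0
      rw [(hderivf v hv0).deriv]
      have := abs_lt.1 (hslope v hv0)
      linarith [this.1]
  set a : ℝ := v' + (v'' - v') / 3 with ha
  set b : ℝ := v' + 2 * (v'' - v') / 3 with hb
  have hsub : v'' - v' > 0 := by linarith
  have haI : a ∈ Ioo v' v'' := ⟨by simp [ha]; linarith, by simp [ha]; linarith⟩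
  have hbI : b ∈ Ioo v' v'' := ⟨by simp [hb]; linarith, by simp [hb]; linarith⟩
  have hab : a < b := by simp [ha, hb]; linarith
  have hfab : f a < f b := hmono haI hbI hab
  set g : ℝ := f b - f a with hg
  have hgpos : 0 < g := by simp [hg]; linarith
  obtain ⟨ha0, ha1⟩ := hrange a haI
  obtain ⟨hb0, hb1⟩ := hrange b hbI
  set ε : ℝ := min (g / 2) (1 - estar a) with hε
  set η : ℝ := min (g / 2) (estar b) with hη
  have hεpos : 0 < ε := lt_min (by linarith) (by linarith)
  have hηpos : 0 < η := lt_min (by linarith) hb0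
  refine ⟨a, estar a + ε / 2, b, estar b - η / 2, f a + g / 2, haI, hbI, ?_, ?_, ?_, ?_, ?_, ?_⟩
  · constructor
    · linarith
    · have : ε ≤ 1 - estar a := min_le_right _ _
      linarith
  · constructor
    · have : η ≤ estar b := min_le_right _ _
      linarith
    · linarith
  · linarith
  · have : ε ≤ g / 2 := min_le_left _ _
    have hfa : f a = a + estar a := rfl
    rw [hfa]
    linarith
  · linarith
  · have : η ≤ g / 2 := min_le_left _ _
    have hfb : f b = b + estar b := rfl
    have hgg : f a + g = b + estar b := by rw [← hfb]; simp [hg]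
    have hfa2 : f a = a + estar a := rfl
    rw [hfa2] at hgg
    have hfa3 : f a + g / 2 = a + estar a + g / 2 := by rw [hfa2]
    rw [hfa3]
    clear_value f a b g ε η
    linarith
end

section
/- If every agent acts on its true preference (pulls arms in decreasing order of latent utility v_j + e_ij via cutoff sets) and each arm accepts its most preferred pulling agent, then no arm has justified envy: there do not exist arms A_j, A_{j'} and agents P_i, P_{i'} such that A_j is matched to P_i, A_{j'} is matched to P_{i'}, A_j strictly prefers P_{i'} to P_i, and P_{i'} strictly prefers A_j to A_{j'} (i.e., v_j + e_{i'j} > v_{j'} + e_{i'j'}). -/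
/-- Fairness (no justified envy) of decentralized matching via cutoff strategies.
Agents pull upward-closed sets of arms with respect to latent utility
`u i a = v a + e i a`, and each pulled arm accepts its most preferred pulling agent.
Then no arm has justified envy: there are no arms `a, a'` matched respectively to
agents `i, i'` such that `a` strictly prefers `i'` to `i` while `i'` strictly prefers
`a` to `a'` (i.e. `u i' a > u i' a'`). -/
theorem cdm_no_justified_envy {ι α : Type*}
    (u : ι → α → ℝ)
    (armPref : α → ι → ι → Prop)
    (harm_asymm : ∀ a i i', armPref a i i' → ¬ armPref a i' i)
    (harm_irrefl : ∀ a i, ¬ armPref a i i)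
    (Pulls : ι → Set α)
    (hcutoff : ∀ i a a', a ∈ Pulls i → u i a < u i a' → a' ∈ Pulls i)
    (M : α → Option ι)
    (hmatched_pulled : ∀ a i, M a = some i → a ∈ Pulls i)
    (haccept_best : ∀ a, (∃ i, a ∈ Pulls i) →
      ∃ i, M a = some i ∧ a ∈ Pulls i ∧
        ∀ i', a ∈ Pulls i' → i' ≠ i → armPref a i i') :
    ¬ ∃ (a a' : α) (i i' : ι),
        M a = some i ∧ M a' = some i' ∧
        armPref a i' i ∧ u i' a' < u i' a := by
  rintro ⟨a, a', i, i', hMa, hMa', hpref, hlt⟩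
  have hpa' : a' ∈ Pulls i' := hmatched_pulled a' i' hMa'
  have hpa : a ∈ Pulls i' := hcutoff i' a' a hpa' hlt
  obtain ⟨j, hMj, _, hbest⟩ := haccept_best a ⟨i', hpa⟩
  have hji : j = i := by
    have := hMa.symm.trans hMj
    exact (Option.some_inj.mp this).symm
  subst hji
  by_cases h : i' = j
  · subst h; exact harm_irrefl a i' hpref
  · exact harm_asymm a j i' (hbest i' hpa h) hpref
end

section
/- Suppose the agent calibrates at s = 1 (the largest state) with cutoff arm set B̂(1) satisfying N(s, B̂(1)) ≤ q for all s, and there exists an additional arm A ∉ B̂(1) with latent utility U(A) > 0 and acceptance probability π(s, A) such that the augmented set B̂(1) ∪ {A} satisfies N(s̃, B̂(1) ∪ {A}) = q for some s̃ < 1 with s̃ > 1 − ε for sufficiently small ε > 0. Then for small enough ε, the average-case expected payoff of pulling B̂(1) ∪ {A} strictly exceeds that of pulling B̂(1): E_{s*}[V(s*, {A})] − γ·E_{s*}[N(s*, {A})·1(s̃ < s* ≤ 1)] > 0. -/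
open MeasureTheory Set

/-- Calibrating at the boundary state `s = 1` is never optimal.  The agent's cutoff
set `B̂(1)` has expected acceptance `Nhat s ≤ q` under every state, and there is an
extra arm `A` with latent utility `U_A ∈ (0, γ)` and acceptance probability `πA s`
(continuous, strictly increasing, valued in `(0,1]`) such that the augmented set has
expected acceptance `Nhat s̃ + πA s̃ = q` for some `s̃` arbitrarily close to `1`.  If
the random true state `S` lies in `[0,1]` and puts no mass at `1`, then for all such
`s̃` close enough to `1` the gain of the extra arm beats the worst-case penalty:
`E[U_A·πA(S)] − γ·E[πA(S)·1(s̃ < S ≤ 1)] > 0`, so the augmented set has strictly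
larger average-case expected payoff. -/
theorem boundary_calibration_suboptimal {Ω : Type*} [MeasurableSpace Ω]
    (P : Measure Ω) [IsProbabilityMeasure P]
    (S : Ω → ℝ) (hSmeas : Measurable S) (hSval : ∀ ω, S ω ∈ Icc (0 : ℝ) 1)
    (hSone : P {ω | S ω = 1} = 0)
    (πA : ℝ → ℝ) (hπAc : Continuous πA) (hπAmono : StrictMono πA)
    (hπArange : ∀ s ∈ Icc (0 : ℝ) 1, πA s ∈ Ioc (0 : ℝ) 1)
    (UA γ q : ℝ) (hUA : 0 < UA) (hγ : UA < γ)
    (Nhat : ℝ → ℝ) (hNhat : ∀ s ∈ Icc (0 : ℝ) 1, Nhat s ≤ q)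
    (hstilde : ∀ ε > (0 : ℝ), ∃ s' ∈ Ioo (1 - ε) 1, Nhat s' + πA s' = q) :
    ∃ ε > (0 : ℝ), ∀ s' ∈ Ioo (1 - ε) 1, Nhat s' + πA s' = q →
      0 < (∫ ω, UA * πA (S ω) ∂P)
          - γ * ∫ ω in {ω | s' < S ω ∧ S ω ≤ 1}, πA (S ω) ∂P := by
  classical
  have hfmeas : Measurable fun ω => πA (S ω) := hπAc.measurable.comp hSmeas
  have hfbound : ∀ ω, πA (S ω) ∈ Ioc (0:ℝ) 1 := fun ω => hπArange _ (hSval ω)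
  have hfint : Integrable (fun ω => πA (S ω)) P := by
    refine ⟨hfmeas.aestronglyMeasurable, ?_⟩
    apply HasFiniteIntegral.of_bounded (C := (1:ℝ))
    filter_upwards with ω
    rw [Real.norm_eq_abs, abs_of_pos (hfbound ω).1]
    exact (hfbound ω).2
  have hγpos : 0 < γ := hUA.trans hγ
  have hπA0 : 0 < πA 0 := (hπArange 0 (by norm_num)).1
  set c : ℝ := UA * πA 0 with hc
  have hcpos : 0 < c := mul_pos hUA hπA0
  have hmain : c ≤ ∫ ω, UA * πA (S ω) ∂P := by
    have h1 : ∫ ω, c ∂P ≤ ∫ ω, UA * πA (S ω) ∂P := by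
      apply integral_mono (integrable_const c) (hfint.const_mul UA)
      intro ω
      exact mul_le_mul_of_nonneg_left (hπAmono.monotone (hSval ω).1) hUA.le
    simpa using h1
  set E : ℕ → Set Ω := fun n => {ω | 1 - 1/(n+1:ℝ) < S ω} ∩ {ω | S ω ≤ 1} with hE
  have hEmeas : ∀ n, MeasurableSet (E n) :=
    fun n => (measurableSet_lt measurable_const hSmeas).inter
      (measurableSet_le hSmeas measurable_const)
  have hEanti : Antitone E := by
    intro m n hmn
    apply inter_subset_inter_left
    intro ω hω
    simp only [mem_setOf_eq] at hω ⊢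
    have hmn' : (m:ℝ) + 1 ≤ (n:ℝ) + 1 := by exact_mod_cast Nat.succ_le_succ hmn
    have : (1:ℝ)/(n+1) ≤ 1/(m+1) :=
      one_div_le_one_div_of_le (by positivity) hmn'
    linarith
  have hEinter : (⋂ n, E n) = {ω | S ω = 1} := by
    ext ω
    simp only [mem_iInter, hE, mem_inter_iff, mem_setOf_eq]
    constructor
    · intro h
      have h1 : S ω ≤ 1 := (h 0).2
      have h2 : 1 ≤ S ω := by
        by_contra hlt
        push_neg at hlt
        obtain ⟨n, hn⟩ := exists_nat_one_div_lt (by linarith : 0 < 1 - S ω)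
        have := (h n).1
        linarith
      linarith
    · intro h n
      refine ⟨?_, h.le⟩
      have : (0:ℝ) < 1/(n+1:ℝ) := by positivity
      linarith [h ▸ this]
  have htend : Filter.Tendsto (fun n => P (E n)) Filter.atTop (nhds 0) := by
    have h := tendsto_measure_iInter_atTop (μ := P)
      (fun n => (hEmeas n).nullMeasurableSet) hEanti ⟨0, measure_ne_top _ _⟩
    rw [hEinter, hSone] at h
    exact h
  have hpos : (0 : ENNReal) < ENNReal.ofReal (c/γ) := by
    rw [ENNReal.ofReal_pos]; positivity
  obtain ⟨n, hn⟩ := (htend.eventually (gt_mem_nhds hpos)).exists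
  refine ⟨1/(n+1:ℝ), by positivity, ?_⟩
  intro s' hs' _
  set T : Set Ω := {ω | s' < S ω ∧ S ω ≤ 1} with hT
  have hsub : T ⊆ E n := by
    intro ω hω
    obtain ⟨h1, h2⟩ := hω
    refine ⟨?_, h2⟩
    have := hs'.1
    simp only [mem_setOf_eq]
    linarith
  have hT1 : ∫ ω in T, πA (S ω) ∂P ≤ (P T).toReal := by
    have hTmeas : MeasurableSet T :=
      (measurableSet_lt measurable_const hSmeas).inter
        (measurableSet_le hSmeas measurable_const)
    have h1 : ∫ ω in T, πA (S ω) ∂P ≤ ∫ ω in T, (1:ℝ) ∂P :=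
      setIntegral_mono_on hfint.integrableOn (integrable_const 1).integrableOn hTmeas
        (fun ω _ => (hfbound ω).2)
    simpa [measureReal_def] using h1
  have h2 : (P T).toReal ≤ (P (E n)).toReal :=
    ENNReal.toReal_mono (measure_ne_top _ _) (measure_mono hsub)
  have h3 : (P (E n)).toReal < c/γ := ENNReal.toReal_lt_of_lt_ofReal hn
  have hfinal : γ * ∫ ω in T, πA (S ω) ∂P < c := by
    calc γ * ∫ ω in T, πA (S ω) ∂P ≤ γ * (P T).toReal :=
          mul_le_mul_of_nonneg_left hT1 hγpos.le
      _ ≤ γ * (P (E n)).toReal := mul_le_mul_of_nonneg_left h2 hγpos.le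
      _ < γ * (c/γ) := mul_lt_mul_of_pos_left h3 hγpos
      _ = c := by field_simp
  linarith [hmain]
end
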